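/- arXiv:2303.06848 — 3 statements merged into one kernel-verified Lean document; each statement's English description precedes it below -/
import Mathlib

section
/- For the DMH game, every strategy matrix in the convex hull of deterministic 1-bit strategies (i.e., 1 cbit plus shared randomness) that puts zero probability on all forbidden entries has expected payoff at most 0. -/
def detStrategy (E : Fin 4 → Fin 2) (D : Fin 2 → Fin 4) : Fin 4 → Fin 4 → ℝ :=
  fun m z => if D (E m) = z then 1 else 0

def dmhForbidden : Finset (Fin 4 × Fin 4) :=
  {(0,3), (1,0), (1,2), (2,2), (2,3), (3,0), (3,1)}

/-- Payoff of a strategy avoiding the forbidden entries: (1/4)(−S(1,1) + S(3,1)). -/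
noncomputable def dmhPayoff (S : Fin 4 → Fin 4 → ℝ) : ℝ :=
  (1/4) * (-(S 0 0) + S 2 0)

noncomputable def dmhL (s : Fin 4 → Fin 4 → ℝ) : ℝ :=
  s 2 0 - s 0 0 - (s 0 3 + s 1 0 + s 1 2 + s 2 2 + s 2 3 + s 3 0 + s 3 1)

set_option maxHeartbeats 2000000 in
lemma dmhL_det (E : Fin 4 → Fin 2) (D : Fin 2 → Fin 4) :
    dmhL (detStrategy E D) ≤ 0 := by
  obtain ⟨x, hx⟩ : ∃ a, D 0 = a := ⟨_, rfl⟩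
  obtain ⟨y, hy⟩ : ∃ a, D 1 = a := ⟨_, rfl⟩
  have hm : ∀ m : Fin 4, D (E m) = x ∨ D (E m) = y := by
    intro m
    have h : E m = 0 ∨ E m = 1 := by omega
    rcases h with h | h <;> rw [h] <;> [left; right] <;> assumption
  simp only [dmhL, detStrategy]
  rcases hm 0 with h0 | h0 <;> rcases hm 1 with h1 | h1 <;>
    rcases hm 2 with h2 | h2 <;> rcases hm 3 with h3 | h3 <;>
    rw [h0, h1, h2, h3] <;> fin_cases x <;> fin_cases y <;> norm_num [Fin.ext_iff, show ((3:Fin 4):ℕ)=3 from rfl, show ((2:Fin 4):ℕ)=2 from rfl, show ((1:Fin 4):ℕ)=1 from rfl, show ((0:Fin 4):ℕ)=0 from rfl]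

lemma dmhL_convexHull (S : Fin 4 → Fin 4 → ℝ)
    (hS : S ∈ convexHull ℝ {s | ∃ E D, s = detStrategy E D}) :
    dmhL S ≤ 0 := by
  have hconv : Convex ℝ {s : Fin 4 → Fin 4 → ℝ | dmhL s ≤ 0} := by
    intro u hu v hv a b ha hb hab
    have : dmhL (a • u + b • v) = a * dmhL u + b * dmhL v := by
      simp only [dmhL, Pi.add_apply, Pi.smul_apply, smul_eq_mul]
      ring
    simp only [Set.mem_setOf_eq] at hu hv ⊢
    rw [this]
    nlinarith
  have hsub : {s : Fin 4 → Fin 4 → ℝ | ∃ E D, s = detStrategy E D} ⊆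
      {s | dmhL s ≤ 0} := by
    rintro s ⟨E, D, rfl⟩
    exact dmhL_det E D
  exact convexHull_min hsub hconv hS

/-- every strategy in the convex hull of deterministic 1-bit strategies
(1 cbit + shared randomness) that puts zero probability on all forbidden entries
has expected payoff at most 0. -/
theorem dmh_shared_randomness_payoff_nonpos
    (S : Fin 4 → Fin 4 → ℝ)
    (hS : S ∈ convexHull ℝ {s | ∃ E D, s = detStrategy E D})
    (hforb : ∀ p ∈ dmhForbidden, S p.1 p.2 = 0) :
    dmhPayoff S ≤ 0 := by
  have hL := dmhL_convexHull S hS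
  have h1 := hforb (0,3) (by decide)
  have h2 := hforb (1,0) (by decide)
  have h3 := hforb (1,2) (by decide)
  have h4 := hforb (2,2) (by decide)
  have h5 := hforb (2,3) (by decide)
  have h6 := hforb (3,0) (by decide)
  have h7 := hforb (3,1) (by decide)
  simp only [dmhL] at hL
  simp only at h1 h2 h3 h4 h5 h6 h7
  simp only [dmhPayoff]
  linarith
end

section
/- Exactly five deterministic 1-bit strategies for the DMH game avoid all forbidden entries, namely those whose strategy matrices have rows (as unit vectors indexed by output) equal to: (e1,e4,e1,e4), (e2,e2,e2,e3), (e2,e2,e2,e4), (e2,e4,e2,e4), and (e3,e2,e2,e3); and each of these has expected payoff 0. -/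
/-- The strategy matrix whose m-th row is the unit vector e_{r m}. -/
def rowStrategy (r : Fin 4 → Fin 4) : Fin 4 → Fin 4 → ℝ :=
  fun m z => if z = r m then 1 else 0

/-!
A deterministic 1-bit strategy is the row strategy of `D ∘ E`, and a map factors through a
two-element set exactly when it takes at most two values. A row strategy avoids the forbidden
entries exactly when its row map does, which confines the rows to `{1,2,3}, {2,4}, {1,2}, {3,4}`
(indices 1-based as in the paper; in `Fin 4` they start at 0). A finite check shows that only
five of these maps take at most two values. Each of them sends rows 1 and 3 to `e1` together or
not at all, and the two terms of the payoff cancel.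
-/

theorem exists_comp_fin_two_iff {α β : Type*} (f : α → β) :
    (∃ (E : α → Fin 2) (D : Fin 2 → β), D ∘ E = f) ↔ ∃ x y, ∀ a, f a = x ∨ f a = y := by
  classical
  constructor
  · rintro ⟨E, D, rfl⟩
    refine ⟨D 0, D 1, fun a => ?_⟩
    rw [Function.comp_apply]
    generalize E a = i
    fin_cases i <;> simp
  · rintro ⟨x, y, hf⟩
    refine ⟨fun a => if f a = x then 0 else 1, ![x, y], funext fun a => ?_⟩
    by_cases hx : f a = x
    · simp [hx]
    · obtain rfl := (hf a).resolve_left hx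
      simp [hx]

theorem detStrategy_eq_rowStrategy (E : Fin 4 → Fin 2) (D : Fin 2 → Fin 4) :
    detStrategy E D = rowStrategy (D ∘ E) := by
  funext m z
  simp [detStrategy, rowStrategy, eq_comm]

theorem rowStrategy_apply_eq_zero_iff (r : Fin 4 → Fin 4) (m z : Fin 4) :
    rowStrategy r m z = 0 ↔ r m ≠ z := by
  simp [rowStrategy, eq_comm]

theorem rowStrategy_avoids_iff (F : Finset (Fin 4 × Fin 4)) (r : Fin 4 → Fin 4) :
    (∀ p ∈ F, rowStrategy r p.1 p.2 = 0) ↔ ∀ p ∈ F, r p.1 ≠ p.2 := by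
  simp only [rowStrategy_apply_eq_zero_iff]

theorem setOf_twoValued_avoiding_dmhForbidden :
    {r : Fin 4 → Fin 4 | (∃ x y, ∀ m, r m = x ∨ r m = y) ∧ ∀ p ∈ dmhForbidden, r p.1 ≠ p.2} =
      {![0,3,0,3], ![1,1,1,2], ![1,1,1,3], ![1,3,1,3], ![2,1,1,2]} := by
  ext r
  simp only [Set.mem_ofPred_eq, Set.mem_insert_iff, Set.mem_singleton_iff]
  revert r
  set_option maxRecDepth 10000 in decide

theorem dmhPayoff_rowStrategy_eq_zero {r : Fin 4 → Fin 4} (h : r 0 = 0 ↔ r 2 = 0) :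
    dmhPayoff (rowStrategy r) = 0 := by
  have h' : 0 = r 0 ↔ 0 = r 2 := by simpa only [eq_comm] using h
  simp only [dmhPayoff, rowStrategy, h']
  ring

/-- exactly five deterministic 1-bit strategies avoid all forbidden
entries — those with rows (e1,e4,e1,e4), (e2,e2,e2,e3), (e2,e2,e2,e4),
(e2,e4,e2,e4), (e3,e2,e2,e3) — and each of these has expected payoff 0. -/
theorem dmh_safe_deterministic_strategies :
    ({s | ∃ E D, s = detStrategy E D ∧ ∀ p ∈ dmhForbidden, s p.1 p.2 = 0} :
        Set (Fin 4 → Fin 4 → ℝ)) =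
      {rowStrategy ![0,3,0,3], rowStrategy ![1,1,1,2], rowStrategy ![1,1,1,3],
        rowStrategy ![1,3,1,3], rowStrategy ![2,1,1,2]} ∧
    (∀ r ∈ ({![0,3,0,3], ![1,1,1,2], ![1,1,1,3], ![1,3,1,3], ![2,1,1,2]} :
        Set (Fin 4 → Fin 4)), dmhPayoff (rowStrategy r) = 0) := by
  have hsafe : {s | ∃ E D, s = detStrategy E D ∧ ∀ p ∈ dmhForbidden, s p.1 p.2 = 0} =
      rowStrategy '' {r | (∃ x y, ∀ m, r m = x ∨ r m = y) ∧
        ∀ p ∈ dmhForbidden, r p.1 ≠ p.2} := by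
    ext s
    simp only [detStrategy_eq_rowStrategy, Set.mem_ofPred_eq, Set.mem_image,
      ← exists_comp_fin_two_iff]
    constructor
    · rintro ⟨E, D, rfl, hs⟩
      exact ⟨D ∘ E, ⟨⟨E, D, rfl⟩, (rowStrategy_avoids_iff _ _).1 hs⟩, rfl⟩
    · rintro ⟨_, ⟨⟨E, D, rfl⟩, hr⟩, rfl⟩
      exact ⟨E, D, rfl, (rowStrategy_avoids_iff _ _).2 hr⟩
  refine ⟨?_, ?_⟩
  · rw [hsafe, setOf_twoValued_avoiding_dmhForbidden]
    simp only [Set.image_insert_eq, Set.image_singleton]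
  · rintro r (rfl | rfl | rfl | rfl | rfl) <;> exact dmhPayoff_rowStrategy_eq_zero (by decide)
end

section
/- Let h be any 2-input-2-output no-signaling correlation satisfying Hardy's conditions with h(0,0|0,0) = h₀ > 0. Then the strategy matrix S defined by S(1,·) = (h(1,0|0,0), h(1,1|0,0), h(0,0|0,1), 0), S(2,·) = (0, h(1,1|1,0), 0, h(0,1|1,1)), S(3,·) = (h(0,0|0,0)+h(1,0|0,0), h(0,1|0,0)+h(1,1|0,0), 0, 0), S(4,·) = (0, 0, h(1,0|1,1), h(0,1|1,1)+h(1,1|1,1)) is a valid stochastic matrix (rows sum to 1), puts zero probability on all DMH-forbidden entries, and achieves expected payoff h₀/4 > 0 in the DMH game. -/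
/-- The strategy matrix built from a correlation h via the Hardy-assisted protocol. -/
noncomputable def hardyStrategy (h : Fin 2 → Fin 2 → Fin 2 → Fin 2 → ℝ) :
    Fin 4 → Fin 4 → ℝ :=
  ![![h 1 0 0 0, h 1 1 0 0, h 0 0 0 1, 0],
    ![0, h 1 1 1 0, 0, h 0 1 1 1],
    ![h 0 0 0 0 + h 1 0 0 0, h 0 1 0 0 + h 1 1 0 0, 0, 0],
    ![0, 0, h 1 0 1 1, h 0 1 1 1 + h 1 1 1 1]]

/-- for any no-signaling correlation satisfying Hardy's conditions with
h(0,0|0,0) = h₀ > 0, the Hardy-assisted strategy matrix is row-stochastic, avoids all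
DMH-forbidden entries, and achieves expected payoff h₀/4 > 0. -/
theorem hardy_strategy_wins_dmh
    (h : Fin 2 → Fin 2 → Fin 2 → Fin 2 → ℝ)
    (hpos : ∀ a b x y, 0 ≤ h a b x y)
    (hnorm : ∀ x y, ∑ a, ∑ b, h a b x y = 1)
    (hnsA : ∀ a x y y', ∑ b, h a b x y = ∑ b, h a b x y')
    (hnsB : ∀ b y x x', ∑ a, h a b x y = ∑ a, h a b x' y)
    (hardy1 : 0 < h 0 0 0 0)
    (hardy2 : h 0 1 0 1 = 0)
    (hardy3 : h 1 0 1 0 = 0)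
    (hardy4 : h 0 0 1 1 = 0) :
    (∀ m, ∑ z, hardyStrategy h m z = 1) ∧
    (∀ p ∈ dmhForbidden, hardyStrategy h p.1 p.2 = 0) ∧
    dmhPayoff (hardyStrategy h) = h 0 0 0 0 / 4 ∧
    0 < dmhPayoff (hardyStrategy h) := by

  have e1 : h 0 0 0 1 = h 0 0 0 0 + h 0 1 0 0 := by
    have := hnsA 0 0 1 0
    simp [Fin.sum_univ_two, hardy2] at this
    linarith
  have e2 : h 1 1 1 0 = h 1 0 1 1 + h 1 1 1 1 := by
    have := hnsA 1 1 0 1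
    simp [Fin.sum_univ_two, hardy3] at this
    linarith
  have n00 := hnorm 0 0
  have n11 := hnorm 1 1
  simp [Fin.sum_univ_two] at n00 n11
  refine ⟨?_, ?_, ?_, ?_⟩
  · intro m
    fin_cases m <;> simp [hardyStrategy, Fin.sum_univ_four, e1, e2] <;> linarith
  · intro p hp
    fin_cases hp <;> simp [hardyStrategy]
  · simp [dmhPayoff, hardyStrategy]; ring
  · simp [dmhPayoff, hardyStrategy]; linarith
end
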